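/- arXiv:1905.06827 — 8 statements merged into one kernel-verified Lean document; each statement's English description precedes it below -/
import Mathlib

section
/- Let Λ be a lattice (discrete cocompact subgroup) in a second countable locally compact abelian group G. Then there exists a relatively compact fundamental domain B for Λ in G with nonempty interior, i.e., a measurable set B such that the translates {λB : λ ∈ Λ} partition G, the closure of B is compact, and the interior of B is nonempty. -/
/-- `B` is a fundamental domain for the subgroup `Λ` in `G`: every `x ∈ G` can be written
uniquely as `x = b * λ` with `b ∈ B` and `λ ∈ Λ` (equivalently, the translates `λ • B`
partition `G`). -/
def IsFundDomain {G : Type*} [Group G] (Λ : Subgroup G) (B : Set G) : Prop :=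
  ∀ x : G, ∃! p : B × Λ, x = (p.1 : G) * (p.2 : G)

/-! Discreteness of `Λ` gives an open, relatively compact neighbourhood `W` of `1` that meets
each coset `xΛ` at most once, and compactness of `G ⧸ Λ` gives finitely many translates `cᵢ • W`
that together meet every coset. Keeping from `cᵢ • W` only the points whose coset misses all the
earlier translates yields a Borel set meeting every coset exactly once; it lies in the compact set
`⋃ᵢ cᵢ • closure W` and contains the open set `c₀ • W`. -/

open Set Pointwise

section SectionOfCover

variable {α β : Type*} (f : α → β) (O : ℕ → Set α)

def sectionOfCover : Set α :=
  ⋃ i, O i ∩ f ⁻¹' disjointed (fun j ↦ f '' O j) i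

theorem bijOn_sectionOfCover (hinj : ∀ i, InjOn f (O i)) (hcov : ⋃ i, f '' O i = univ) :
    BijOn f (sectionOfCover f O) univ := by
  refine ⟨mapsTo_univ _ _, ?_, ?_⟩
  · rintro a ha b hb hab
    obtain ⟨i, hai, hfa⟩ := mem_iUnion.mp ha
    obtain ⟨j, hbj, hfb⟩ := mem_iUnion.mp hb
    obtain rfl : i = j := by
      by_contra hij
      rw [mem_preimage, ← hab] at hfb
      exact disjoint_left.mp (disjoint_disjointed _ hij) hfa hfb
    exact hinj i hai hbj hab
  · intro y _
    rw [← iUnion_disjointed] at hcov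
    obtain ⟨i, hi⟩ := mem_iUnion.mp (hcov ▸ mem_univ y)
    obtain ⟨a, ha, rfl⟩ := disjointed_subset _ i hi
    exact ⟨a, mem_iUnion.mpr ⟨i, ha, hi⟩, rfl⟩

theorem sectionOfCover_subset : sectionOfCover f O ⊆ ⋃ i, O i :=
  iUnion_mono fun _ ↦ inter_subset_left

theorem subset_sectionOfCover : O 0 ⊆ sectionOfCover f O := fun a ha ↦
  mem_iUnion.mpr ⟨0, ha, by rw [mem_preimage, disjointed_zero]; exact mem_image_of_mem f ha⟩

theorem MeasurableSet.sectionOfCover [MeasurableSpace α] [MeasurableSpace β]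
    (hf : Measurable f) (hO : ∀ i, MeasurableSet (O i)) (hfO : ∀ i, MeasurableSet (f '' O i)) :
    MeasurableSet (sectionOfCover f O) :=
  .iUnion fun i ↦ (hO i).inter (hf (.disjointed hfO i))

end SectionOfCover

section QuotientGroup

variable {G : Type*} [Group G]

theorem isFundDomain_of_bijOn {Λ : Subgroup G} {B : Set G}
    (h : BijOn (QuotientGroup.mk : G → G ⧸ Λ) B univ) : IsFundDomain Λ B := by
  intro x
  obtain ⟨b, hb, hbx⟩ := h.surjOn (mem_univ (x : G ⧸ Λ))
  refine ⟨(⟨b, hb⟩, ⟨b⁻¹ * x, QuotientGroup.eq.mp hbx⟩), by simp, ?_⟩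
  rintro ⟨⟨b', hb'⟩, l⟩ rfl
  have hbb' : b' = b := h.injOn hb' hb (by simp [hbx])
  subst hbb'
  ext <;> simp

theorem injOn_mk_smul {Λ : Subgroup G} {W : Set G}
    (hW : InjOn (QuotientGroup.mk : G → G ⧸ Λ) W) (g : G) :
    InjOn (QuotientGroup.mk : G → G ⧸ Λ) (g • W) := by
  rintro _ ⟨a, ha, rfl⟩ _ ⟨b, hb, rfl⟩ hab
  rw [QuotientGroup.eq] at hab
  rw [hW ha hb (QuotientGroup.eq.mpr (by simpa [mul_assoc] using hab))]

variable [TopologicalSpace G] [IsTopologicalGroup G]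

theorem exists_isOpen_one_mem_isCompact_closure_injOn_mk [WeaklyLocallyCompactSpace G]
    (Λ : Subgroup G) [DiscreteTopology Λ] :
    ∃ W : Set G, IsOpen W ∧ 1 ∈ W ∧ IsCompact (closure W) ∧
      InjOn (QuotientGroup.mk : G → G ⧸ Λ) W := by
  obtain ⟨U, hU, -, hUΛ⟩ := IsDiscrete.exists_nhds_eq_one_of_image_mulRight_inter_nonempty Λ
    (isDiscrete_iff_discreteTopology.mpr ‹_›)
  obtain ⟨V, hVo, hV1, hVc⟩ := exists_isOpen_mem_isCompact_closure (1 : G)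
  refine ⟨interior U ∩ V, isOpen_interior.inter hVo, ⟨mem_interior_iff_mem_nhds.mpr hU, hV1⟩,
    hVc.closure_of_subset (inter_subset_right.trans subset_closure), ?_⟩
  intro a ha b hb hab
  have hl : a⁻¹ * b = 1 := hUΛ _ (QuotientGroup.eq.mp hab)
    ⟨b, ⟨a, interior_subset ha.1, by simp⟩, interior_subset hb.1⟩
  exact inv_mul_eq_one.mp hl

theorem exists_finite_range_iUnion_image_mk_smul_eq_univ {Λ : Subgroup G} [CompactSpace (G ⧸ Λ)]
    {W : Set G} (hW : IsOpen W) (h1 : (1 : G) ∈ W) :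
    ∃ c : ℕ → G, (range c).Finite ∧ ⋃ i, (QuotientGroup.mk : G → G ⧸ Λ) '' (c i • W) = univ := by
  have hcov : univ ⊆ ⋃ g : G, (QuotientGroup.mk : G → G ⧸ Λ) '' (g • W) := fun q _ ↦ by
    obtain ⟨g, rfl⟩ := QuotientGroup.mk_surjective q
    exact mem_iUnion.mpr ⟨g, g, ⟨1, h1, mul_one g⟩, rfl⟩
  obtain ⟨t, ht⟩ := isCompact_univ.elim_finite_subcover _
    (fun g ↦ QuotientGroup.isOpenMap_coe _ (hW.smul g)) hcov
  obtain ⟨g, hg, -⟩ := mem_iUnion₂.mp (ht (mem_univ ((1 : G) : G ⧸ Λ)))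
  obtain ⟨c, hc⟩ := t.countable_toSet.exists_eq_range ⟨g, hg⟩
  refine ⟨c, hc ▸ t.finite_toSet, univ_subset_iff.mp fun q hq ↦ ?_⟩
  obtain ⟨g, hg, hgq⟩ := mem_iUnion₂.mp (ht hq)
  obtain ⟨i, rfl⟩ : g ∈ range c := hc ▸ hg
  exact mem_iUnion.mpr ⟨i, hgq⟩

theorem measurableSet_image_mk_of_isOpen [MeasurableSpace G] [OpensMeasurableSpace G]
    {Λ : Subgroup G} {U : Set G} (hU : IsOpen U) :
    MeasurableSet ((QuotientGroup.mk : G → G ⧸ Λ) '' U) :=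
  ((QuotientGroup.isOpenMap_coe _ hU).preimage continuous_quotient_mk').measurableSet

theorem isCompact_closure_iUnion_smul {c : ℕ → G} (hc : (range c).Finite) {W : Set G}
    (hW : IsCompact (closure W)) : IsCompact (closure (⋃ i, c i • W)) := by
  have hK : IsCompact (⋃ g ∈ range c, g • closure W) := hc.isCompact_biUnion fun g _ ↦ hW.smul g
  refine hK.closure_of_subset ?_
  rw [biUnion_range]
  exact iUnion_mono fun i ↦ smul_set_mono subset_closure

end QuotientGroup

theorem exists_relatively_compact_fundamental_domain_with_nonempty_interior_general
    {G : Type*} [CommGroup G] [TopologicalSpace G] [IsTopologicalGroup G]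
    [LocallyCompactSpace G]
    [MeasurableSpace G] [BorelSpace G]
    (Λ : Subgroup G) [DiscreteTopology Λ] [CompactSpace (G ⧸ Λ)] :
    ∃ B : Set G, MeasurableSet B ∧ IsFundDomain Λ B ∧
      IsCompact (closure B) ∧ (interior B).Nonempty := by
  obtain ⟨W, hWo, hW1, hWc, hWinj⟩ := exists_isOpen_one_mem_isCompact_closure_injOn_mk Λ
  obtain ⟨c, hc, hcov⟩ := exists_finite_range_iUnion_image_mk_smul_eq_univ (Λ := Λ) hWo hW1
  set O : ℕ → Set G := fun i ↦ c i • W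
  have hOo (i : ℕ) : IsOpen (O i) := hWo.smul (c i)
  refine ⟨sectionOfCover (QuotientGroup.mk : G → G ⧸ Λ) O, ?_, ?_, ?_, ?_⟩
  · exact .sectionOfCover _ _ measurable_quotient_mk'' (fun i ↦ (hOo i).measurableSet)
      fun i ↦ measurableSet_image_mk_of_isOpen (hOo i)
  · exact isFundDomain_of_bijOn (bijOn_sectionOfCover _ _ (fun i ↦ injOn_mk_smul hWinj (c i)) hcov)
  · exact (isCompact_closure_iUnion_smul hc hWc).closure_of_subset
      ((sectionOfCover_subset _ _).trans subset_closure)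
  · exact ⟨c 0, interior_maximal (subset_sectionOfCover _ _) (hOo 0) ⟨1, hW1, mul_one _⟩⟩

/-- A lattice in a second countable locally compact abelian group admits a
relatively compact measurable fundamental domain with nonempty interior. -/
theorem exists_relatively_compact_fundamental_domain_with_nonempty_interior
    {G : Type*} [CommGroup G] [TopologicalSpace G] [IsTopologicalGroup G]
    [LocallyCompactSpace G] [T2Space G] [SecondCountableTopology G]
    [MeasurableSpace G] [BorelSpace G]
    (Λ : Subgroup G) [DiscreteTopology Λ] [CompactSpace (G ⧸ Λ)] :
    ∃ B : Set G, MeasurableSet B ∧ IsFundDomain Λ B ∧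
      IsCompact (closure B) ∧ (interior B).Nonempty :=
  exists_relatively_compact_fundamental_domain_with_nonempty_interior_general Λ
end

section
/- Let Λ be a lattice in a second countable locally compact abelian group G. Then there exist finitely many relatively compact fundamental domains B₁, …, B_k for Λ in G such that G = ⋃_{j=1}^k (B_j)°Λ, where (B_j)° denotes the interior. Moreover, the B_j can be chosen as translates x_j B of a single relatively compact fundamental domain B with nonempty interior. -/
open scoped Pointwise

/-!
A discrete subgroup `Λ` has a neighbourhood `V` of `1` on which `G → G ⧸ Λ` is injective, and by
compactness of `G ⧸ Λ` finitely many translates `W i = gᵢ V` cover `G` modulo `Λ`. Keeping from each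
`W i` the points not already reached modulo `Λ` by an earlier `W j` yields a fundamental domain
`B ⊆ ⋃ W i`, hence relatively compact, which contains the open set `W 0`. The translate
`(gⱼ g₀⁻¹) B` then contains `W j` in its interior, and the `W j` cover `G` modulo `Λ`.
-/

open Set Filter Topology

section FundDomain

variable {G : Type*} [Group G] {Λ : Subgroup G} {B : Set G}

theorem isFundDomain_iff_bijOn :
    IsFundDomain Λ B ↔ BijOn (QuotientGroup.mk : G → G ⧸ Λ) B univ := by
  refine ⟨fun h => ⟨mapsTo_univ _ _, ?_, ?_⟩, fun ⟨_, hinj, hsurj⟩ x => ?_⟩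
  · intro b hb b' hb' hbb'
    have hmem : b⁻¹ * b' ∈ Λ := QuotientGroup.eq.mp hbb'
    have hrep := (h b').unique (y₁ := (⟨b', hb'⟩, 1)) (y₂ := (⟨b, hb⟩, ⟨_, hmem⟩)) (by simp)
      (by simp)
    exact congrArg (fun p => (p.1 : G)) hrep.symm
  · rintro q -
    induction q using QuotientGroup.induction_on with | H x =>
    obtain ⟨⟨⟨b, hb⟩, l⟩, rfl, -⟩ := h x
    exact ⟨b, hb, QuotientGroup.eq.mpr (by simp)⟩
  · obtain ⟨b, hb, hbx⟩ := hsurj (mem_univ (x : G ⧸ Λ))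
    refine ⟨(⟨b, hb⟩, ⟨b⁻¹ * x, QuotientGroup.eq.mp hbx⟩), by simp, ?_⟩
    rintro ⟨⟨b', hb'⟩, l⟩ rfl
    obtain rfl : b' = b := hinj hb' hb (hbx ▸ QuotientGroup.eq.mpr (by simp))
    ext <;> simp

theorem IsFundDomain.smul_set (h : IsFundDomain Λ B) (a : G) : IsFundDomain Λ (a • B) := by
  rw [isFundDomain_iff_bijOn] at h ⊢
  have hB : BijOn (a⁻¹ • ·) (a • B) B := by
    have := (MulAction.injective a⁻¹).injOn.bijOn_image (s := a • B)
    rwa [image_smul, inv_smul_smul] at this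
  have := ((MulAction.bijective a).bijOn_univ (α := G ⧸ Λ)).comp (h.comp hB)
  simpa [Function.comp_def] using this

theorem Set.InjOn.quotientMk_smul_set {V : Set G} (h : InjOn (QuotientGroup.mk : G → G ⧸ Λ) V)
    (g : G) : InjOn (QuotientGroup.mk : G → G ⧸ Λ) (g • V) := by
  rintro _ ⟨v, hv, rfl⟩ _ ⟨v', hv', rfl⟩ hvv'
  refine congrArg (g • ·) (h hv hv' (QuotientGroup.eq.mpr ?_))
  simpa [mul_assoc] using QuotientGroup.eq.mp hvv'

theorem iUnion_mul_subgroup_eq_univ {ι : Type*} {W : ι → Set G}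
    (hcov : ⋃ i, (QuotientGroup.mk : G → G ⧸ Λ) '' W i = univ) : ⋃ i, W i * (Λ : Set G) = univ := by
  rw [← preimage_univ (f := (QuotientGroup.mk : G → G ⧸ Λ)), ← hcov, preimage_iUnion]
  simp only [QuotientGroup.preimage_image_mk_eq_mul]

end FundDomain

section DisjointedSection

variable {α β ι : Type*} [LinearOrder ι] [LocallyFiniteOrderBot ι] (f : α → β) (W : ι → Set α)

def disjointedSection : Set α := ⋃ i, W i ∩ f ⁻¹' disjointed (fun j => f '' W j) i

theorem disjointedSection_subset_iUnion : disjointedSection f W ⊆ ⋃ i, W i :=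
  iUnion_mono fun _ => inter_subset_left

theorem subset_disjointedSection_bot [OrderBot ι] : W ⊥ ⊆ disjointedSection f W :=
  fun x hx => mem_iUnion_of_mem ⊥ ⟨hx, by simpa using mem_image_of_mem f hx⟩

variable {f W}

theorem bijOn_disjointedSection (hinj : ∀ i, InjOn f (W i)) (hcov : ⋃ i, f '' W i = univ) :
    BijOn f (disjointedSection f W) univ := by
  refine ⟨mapsTo_univ _ _, ?_, ?_⟩
  · simp only [InjOn, disjointedSection, mem_iUnion]
    rintro x ⟨i, hxi, hfxi⟩ y ⟨j, hyj, hfyj⟩ hxy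
    obtain rfl : i = j := by
      by_contra hij
      exact disjoint_left.mp (disjoint_disjointed _ hij) (mem_preimage.mp hfxi)
        (hxy ▸ mem_preimage.mp hfyj)
    exact hinj i hxi hyj hxy
  · intro y _
    have hy : y ∈ ⋃ i, disjointed (fun j => f '' W j) i := by simp [iUnion_disjointed, hcov]
    obtain ⟨i, hi⟩ := mem_iUnion.mp hy
    obtain ⟨x, hx, rfl⟩ := disjointed_subset _ i hi
    exact ⟨x, mem_iUnion_of_mem i ⟨hx, hi⟩, rfl⟩

theorem measurableSet_disjointedSection [Countable ι] [TopologicalSpace α] [MeasurableSpace α]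
    [OpensMeasurableSpace α] [TopologicalSpace β] (hf : Continuous f) (hfo : IsOpenMap f)
    (hW : ∀ i, IsOpen (W i)) : MeasurableSet (disjointedSection f W) := by
  have hpre : ∀ i, MeasurableSet (f ⁻¹' (f '' W i)) :=
    fun i => ((hfo _ (hW i)).preimage hf).measurableSet
  refine MeasurableSet.iUnion fun i => (hW i).measurableSet.inter ?_
  refine disjointedRec (p := fun t => MeasurableSet (f ⁻¹' t)) (fun t j ht => ?_) (hpre i)
  exact ht.diff (hpre j)

end DisjointedSection

section QuotientCover

variable {G : Type*} [Group G] [TopologicalSpace G] [IsTopologicalGroup G] {Λ : Subgroup G}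

variable (Λ)

theorem exists_nhds_one_injOn_quotientMk [DiscreteTopology Λ] :
    ∃ V ∈ 𝓝 (1 : G), InjOn (QuotientGroup.mk : G → G ⧸ Λ) V := by
  obtain ⟨U, hU, hUΛ⟩ := nhds_inter_eq_singleton_of_mem_discrete
    (isDiscrete_iff_discreteTopology.mpr ‹_›) Λ.one_mem
  have hcont : Tendsto (fun p : G × G => p.1⁻¹ * p.2) (𝓝 1 ×ˢ 𝓝 1) (𝓝 1) := by
    rw [← nhds_prod_eq]
    exact (continuous_fst.inv.mul continuous_snd).tendsto' _ _ (by simp)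
  obtain ⟨V, hV, hVU⟩ :=
    eventually_prod_self_iff (r := fun v v' => v⁻¹ * v' ∈ U) |>.mp (hcont.eventually_mem hU)
  refine ⟨V, hV, fun v hv v' hv' hvv' => ?_⟩
  have : v⁻¹ * v' ∈ U ∩ Λ := ⟨hVU v hv v' hv', QuotientGroup.eq.mp hvv'⟩
  rw [hUΛ, mem_singleton_iff, inv_mul_eq_one] at this
  exact this

theorem exists_isOpen_one_mem_isCompact_closure_injOn_quotientMk [LocallyCompactSpace G]
    [DiscreteTopology Λ] : ∃ V : Set G, IsOpen V ∧ (1 : G) ∈ V ∧ IsCompact (closure V) ∧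
      InjOn (QuotientGroup.mk : G → G ⧸ Λ) V := by
  obtain ⟨V, hV, hinj⟩ := exists_nhds_one_injOn_quotientMk Λ
  obtain ⟨K, hK, hK1⟩ := exists_compact_mem_nhds (1 : G)
  refine ⟨interior (V ∩ K), isOpen_interior, mem_interior_iff_mem_nhds.mpr (inter_mem hV hK1),
    hK.closure_of_subset (interior_subset.trans inter_subset_right),
    hinj.mono (interior_subset.trans inter_subset_left)⟩

theorem exists_fin_iUnion_image_quotientMk_smul_eq_univ [CompactSpace (G ⧸ Λ)] {V : Set G}
    (hV : IsOpen V) (h1 : (1 : G) ∈ V) :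
    ∃ (k : ℕ) (g : Fin k → G), ⋃ i, (QuotientGroup.mk : G → G ⧸ Λ) '' (g i • V) = univ := by
  obtain ⟨t, ht⟩ := isCompact_univ.elim_finite_subcover
    (fun g : G => (QuotientGroup.mk : G → G ⧸ Λ) '' (g • V))
    (fun g => QuotientGroup.isOpenMap_coe _ (hV.smul g)) fun q _ => by
      induction q using QuotientGroup.induction_on with | H x =>
      exact mem_iUnion_of_mem x (mem_image_of_mem _ (by simpa using smul_mem_smul_set (a := x) h1))
  refine ⟨t.card, (↑) ∘ t.equivFin.symm, univ_subset_iff.mp ?_⟩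
  rwa [Function.comp_def, t.equivFin.symm.surjective.iUnion_comp
    (fun g : t => QuotientGroup.mk '' ((g : G) • V)), iUnion_subtype]

end QuotientCover

theorem exists_finitely_many_fundamental_domains_interiors_cover_general
    {G : Type*} [CommGroup G] [TopologicalSpace G] [IsTopologicalGroup G]
    [LocallyCompactSpace G]
    [MeasurableSpace G] [BorelSpace G]
    (Λ : Subgroup G) [DiscreteTopology Λ] [CompactSpace (G ⧸ Λ)] :
    ∃ (B : Set G), MeasurableSet B ∧ IsFundDomain Λ B ∧ IsCompact (closure B) ∧
      (interior B).Nonempty ∧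
      ∃ (k : ℕ) (x : Fin k → G),
        (∀ j, IsFundDomain Λ (x j • B) ∧ IsCompact (closure (x j • B))) ∧
        (⋃ j, interior (x j • B) * (Λ : Set G)) = Set.univ := by
  obtain ⟨V, hVo, hV1, hVc, hinj⟩ := exists_isOpen_one_mem_isCompact_closure_injOn_quotientMk Λ
  obtain ⟨k, g, hcov⟩ := exists_fin_iUnion_image_quotientMk_smul_eq_univ Λ hVo hV1
  obtain ⟨n, rfl⟩ : ∃ n, k = n + 1 := Nat.exists_eq_succ_of_ne_zero
    (by rintro rfl; exact empty_ne_univ (by simpa using hcov))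
  set W : Fin (n + 1) → Set G := fun i => g i • V
  set B := disjointedSection (QuotientGroup.mk : G → G ⧸ Λ) W
  have hB : IsFundDomain Λ B := isFundDomain_iff_bijOn.mpr
    (bijOn_disjointedSection (fun i => hinj.quotientMk_smul_set (g i)) hcov)
  have hBc : IsCompact (closure B) := (isCompact_iUnion fun i => hVc.smul (g i)).closure_of_subset
    ((disjointedSection_subset_iUnion _ _).trans (iUnion_mono fun i => by
      simpa only [W, closure_smul] using smul_set_mono subset_closure))
  have hW₀ : W ⊥ ⊆ interior B :=
    interior_maximal (subset_disjointedSection_bot _ _) (hVo.smul _)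
  have hWj : ∀ j, W j ⊆ interior ((g j * (g ⊥)⁻¹) • B) := fun j => by
    rw [interior_smul]
    simpa [W, smul_smul] using smul_set_mono (a := g j * (g ⊥)⁻¹) hW₀
  refine ⟨B, measurableSet_disjointedSection QuotientGroup.continuous_mk
    QuotientGroup.isOpenMap_coe fun i => hVo.smul (g i), hB, hBc,
    ⟨_, hW₀ (smul_mem_smul_set hV1)⟩, n + 1, fun j => g j * (g ⊥)⁻¹,
    fun j => ⟨hB.smul_set _, by rw [closure_smul]; exact hBc.smul _⟩, univ_subset_iff.mp ?_⟩
  rw [← iUnion_mul_subgroup_eq_univ hcov]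
  exact iUnion_mono fun j => mul_subset_mul_right (hWj j)

/-- There exist finitely many relatively compact fundamental domains
`B₁, …, B_k` for a lattice `Λ` in a second countable LCA group `G` such that
`G = ⋃ⱼ (Bⱼ)°Λ`; moreover they can be chosen as translates `xⱼ • B` of a single relatively
compact fundamental domain `B` with nonempty interior. -/
theorem exists_finitely_many_fundamental_domains_interiors_cover
    {G : Type*} [CommGroup G] [TopologicalSpace G] [IsTopologicalGroup G]
    [LocallyCompactSpace G] [T2Space G] [SecondCountableTopology G]
    [MeasurableSpace G] [BorelSpace G]
    (Λ : Subgroup G) [DiscreteTopology Λ] [CompactSpace (G ⧸ Λ)] :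
    ∃ (B : Set G), MeasurableSet B ∧ IsFundDomain Λ B ∧ IsCompact (closure B) ∧
      (interior B).Nonempty ∧
      ∃ (k : ℕ) (x : Fin k → G),
        (∀ j, IsFundDomain Λ (x j • B) ∧ IsCompact (closure (x j • B))) ∧
        (⋃ j, interior (x j • B) * (Λ : Set G)) = Set.univ :=
  exists_finitely_many_fundamental_domains_interiors_cover_general Λ
end

section
/- Let B be a fundamental domain for a lattice Λ in a locally compact abelian group G, and let ⌊·⌋_B : G → Λ be the function assigning to x ∈ G the unique λ ∈ Λ such that x = bλ for some b ∈ B. Then ⌊·⌋_B is locally constant on B°Λ and discontinuous at every point of the complement (∂B)Λ. -/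
open scoped Pointwise

open scoped Topology

/-!
Write `x = b * l` with `b ∈ B`, `l ∈ Λ`. The level set `{y | ⌊y⌋_B = l}` is exactly the translate
`B * l`, so `⌊·⌋_B` is locally constant at `x` iff `B` is a neighbourhood of `b`, i.e. iff
`b ∈ B°`; since `Λ` is discrete, continuity at `x` already forces this. The complement of `B°Λ`
is `(∂B)Λ` because a translate `c * n` of a point `c ∈ closure B` can only land in `B°` for
`n = 1`: a point of `B` close to `c` would otherwise have two representatives.
-/

namespace IsFundDomain

variable {G : Type*} [Group G] {Λ : Subgroup G} {B : Set G} {fl : G → Λ}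

theorem eq_of_mul_eq_mul (hB : IsFundDomain Λ B) {b b' : G} (hb : b ∈ B) (hb' : b' ∈ B)
    {l l' : Λ} (h : b * l = b' * l') : l = l' := by
  obtain ⟨p, -, hp⟩ := hB (b * l)
  exact congrArg Prod.snd ((hp (⟨b, hb⟩, l) rfl).trans (hp (⟨b', hb'⟩, l') h).symm)

theorem eq_one_of_mem_of_mul_mem (hB : IsFundDomain Λ B) {b : G} {n : Λ} (hb : b ∈ B)
    (hbn : b * n ∈ B) : n = 1 :=
  hB.eq_of_mul_eq_mul hb hbn (by simp)

theorem mul_eq_univ (hB : IsFundDomain Λ B) : B * (Λ : Set G) = Set.univ :=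
  Set.eq_univ_of_forall fun x ↦
    let ⟨⟨b, l⟩, hx, _⟩ := hB x
    ⟨b, b.2, l, l.2, hx.symm⟩

theorem floor_eq_iff (hB : IsFundDomain Λ B) (hfl : ∀ x : G, x * ((fl x : G))⁻¹ ∈ B)
    {y : G} {l : Λ} : fl y = l ↔ y * (l : G)⁻¹ ∈ B := by
  refine ⟨fun h ↦ h ▸ hfl y, fun h ↦ (hB.eq_of_mul_eq_mul h (hfl y) ?_).symm⟩
  simp only [inv_mul_cancel_right]

variable [TopologicalSpace G]

theorem mem_interior_mul_iff (hB : IsFundDomain Λ B) (hfl : ∀ x : G, x * ((fl x : G))⁻¹ ∈ B)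
    {x : G} : x ∈ interior B * (Λ : Set G) ↔ x * ((fl x : G))⁻¹ ∈ interior B := by
  refine ⟨?_, fun h ↦ ⟨_, h, fl x, (fl x).2, by group⟩⟩
  rintro ⟨b, hb, l, hl, rfl⟩
  have hfl_eq : fl (b * l) = ⟨l, hl⟩ := (hB.floor_eq_iff hfl).2 (by simpa using interior_subset hb)
  simpa [hfl_eq] using hb

variable [SeparatelyContinuousMul G]

theorem eventually_floor_eq_iff (hB : IsFundDomain Λ B)
    (hfl : ∀ x : G, x * ((fl x : G))⁻¹ ∈ B) {x : G} :
    (∀ᶠ y in 𝓝 x, fl y = fl x) ↔ x * ((fl x : G))⁻¹ ∈ interior B := by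
  have hlevel : {y | fl y = fl x} = Homeomorph.mulRight ((fl x : G))⁻¹ ⁻¹' B :=
    Set.ext fun y ↦ hB.floor_eq_iff hfl
  rw [Filter.Eventually, hlevel, ← mem_interior_iff_mem_nhds, ← Homeomorph.preimage_interior]
  rfl

theorem mem_interior_of_mem_closure (hB : IsFundDomain Λ B) {c : G} {n : Λ}
    (hc : c ∈ closure B) (hcn : c * n ∈ interior B) : c ∈ interior B := by
  have hU : IsOpen {y : G | y * n ∈ interior B} :=
    isOpen_interior.preimage (continuous_mul_const _)
  obtain ⟨b, hbn, hb⟩ := mem_closure_iff.1 hc _ hU hcn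
  have hn : n = 1 := hB.eq_one_of_mem_of_mul_mem hb (interior_subset hbn)
  simpa [hn] using hcn

theorem disjoint_interior_mul_frontier_mul (hB : IsFundDomain Λ B) :
    Disjoint (interior B * (Λ : Set G)) (frontier B * (Λ : Set G)) := by
  refine Set.disjoint_left.2 ?_
  rintro x ⟨b, hb, l, hl, rfl⟩ ⟨c, hc, m, hm, hcm⟩
  have hcb : c * ((⟨m, hm⟩ * (⟨l, hl⟩ : Λ)⁻¹ : Λ) : G) = b := by
    simp only [Subgroup.coe_mul, Subgroup.coe_inv, ← mul_assoc, hcm, mul_inv_cancel_right]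
  exact hc.2 (hB.mem_interior_of_mem_closure hc.1 (hcb ▸ hb))

theorem compl_interior_mul (hB : IsFundDomain Λ B) :
    (interior B * (Λ : Set G))ᶜ = frontier B * (Λ : Set G) := by
  refine IsCompl.compl_eq ⟨hB.disjoint_interior_mul_frontier_mul, codisjoint_iff.2 ?_⟩
  change _ ∪ _ = Set.univ
  rw [← Set.union_mul, ← closure_eq_interior_union_frontier, ← Set.univ_subset_iff,
    ← hB.mul_eq_univ]
  exact Set.mul_subset_mul_right subset_closure

end IsFundDomain

theorem floor_locallyConstant_on_interior_mul_and_discontinuous_elsewhere_general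
    {G : Type*} [CommGroup G] [TopologicalSpace G] [IsTopologicalGroup G]
    (Λ : Subgroup G) [DiscreteTopology Λ]
    (B : Set G) (hB : IsFundDomain Λ B)
    (fl : G → Λ) (hfl : ∀ x : G, x * ((fl x : G))⁻¹ ∈ B) :
    (∀ x ∈ interior B * (Λ : Set G), ∀ᶠ y in nhds x, fl y = fl x) ∧
    ((interior B * (Λ : Set G))ᶜ = frontier B * (Λ : Set G)) ∧
    (∀ x ∉ interior B * (Λ : Set G), ¬ ContinuousAt fl x) := by
  refine ⟨fun x hx ↦ ?_, hB.compl_interior_mul, fun x hx hcont ↦ hx ?_⟩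
  · exact (hB.eventually_floor_eq_iff hfl).2 ((hB.mem_interior_mul_iff hfl).1 hx)
  · have hlocal : ∀ᶠ y in 𝓝 x, fl y = fl x := hcont ((isOpen_discrete {fl x}).mem_nhds rfl)
    exact (hB.mem_interior_mul_iff hfl).2 ((hB.eventually_floor_eq_iff hfl).1 hlocal)

/-- The generalized floor function `⌊·⌋_B : G → Λ` associated to a
fundamental domain `B` of a lattice `Λ` is locally constant on `B°Λ` and discontinuous
at every point of the complement `(∂B)Λ = (B°Λ)ᶜ`. -/
theorem floor_locallyConstant_on_interior_mul_and_discontinuous_elsewhere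
    {G : Type*} [CommGroup G] [TopologicalSpace G] [IsTopologicalGroup G]
    [LocallyCompactSpace G] [T2Space G]
    (Λ : Subgroup G) [DiscreteTopology Λ] [CompactSpace (G ⧸ Λ)]
    (B : Set G) (hB : IsFundDomain Λ B)
    (fl : G → Λ) (hfl : ∀ x : G, x * ((fl x : G))⁻¹ ∈ B) :
    (∀ x ∈ interior B * (Λ : Set G), ∀ᶠ y in nhds x, fl y = fl x) ∧
    ((interior B * (Λ : Set G))ᶜ = frontier B * (Λ : Set G)) ∧
    (∀ x ∉ interior B * (Λ : Set G), ¬ ContinuousAt fl x) :=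
  floor_locallyConstant_on_interior_mul_and_discontinuous_elsewhere_general Λ B hB fl hfl
end

section
/- Let A be a unital C*-algebra and E a left Hilbert A-module with a normalized tight module frame {η₁, …, η_k}. Then the k×k matrix P with entries P_{ij} = ⟨η_i, η_j⟩_A is a projection in M_k(A) (i.e., P = P* = P²), and E is isomorphic as a Hilbert A-module to A^k P. -/
/-- Polarization: a sesquilinear form vanishing on the diagonal vanishes. -/
lemma polarization_key
    {A : Type*} [NormedRing A] [StarRing A] [NormedAlgebra ℂ A] [StarModule ℂ A]
    {E : Type*} [AddCommGroup E] [Module A E]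
    (D : E → E → A)
    (hD0 : ∀ x, D x x = 0)
    (hDa1 : ∀ x y z, D (x + y) z = D x z + D y z)
    (hDa2 : ∀ x y z, D x (y + z) = D x y + D x z)
    (hDs1 : ∀ (a : A) x y, D (a • x) y = a * D x y)
    (hDs2 : ∀ (a : A) x y, D x (a • y) = D x y * star a) :
    ∀ x y, D x y = 0 := by
  intro x y
  set iA : A := algebraMap ℂ A Complex.I with hiA
  have hstariA : star iA = -iA := by
    rw [hiA, ← algebraMap_star_comm]
    simp
  have hiA2 : iA * iA = -1 := by
    rw [hiA, ← map_mul, Complex.I_mul_I, map_neg, map_one]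
  have hanti : ∀ u v : E, D u v = -D v u := by
    intro u v
    have h := hD0 (u + v)
    rw [hDa1, hDa2, hDa2, hD0, hD0] at h
    have h' : D u v + D v u = 0 := by
      simpa using h
    exact eq_neg_of_add_eq_zero_left h'
  have h := hD0 (x + iA • y)
  rw [hDa1, hDa2, hDa2, hD0, hDs2, hDs1, hDs1, hDs2, hD0] at h
  rw [hstariA, hanti y x] at h
  have hcomm : iA * D x y = D x y * iA := Algebra.commutes Complex.I (D x y)
  -- h : 0 + D x y * -iA + (iA * -D x y + iA * (0 * -iA)) = 0  (roughly)
  have h2 : iA * D x y + iA * D x y = 0 := by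
    simp only [mul_neg, mul_zero, zero_mul, neg_mul, zero_add, add_zero, neg_zero] at h
    have h' : D x y * iA + iA * D x y = 0 := by
      have h'' := congrArg (- ·) h
      simp only [neg_add, neg_neg, neg_zero, add_zero] at h''
      simpa using h''
    rw [← hcomm] at h'
    exact h'
  have h3 : (2 : ℂ) • (iA * D x y) = 0 := by
    rw [two_smul]; exact h2
  have h4 : iA * D x y = 0 := by
    have := smul_eq_zero.mp h3
    rcases this with h | h
    · norm_num at h
    · exact h
  have : iA * (iA * D x y) = 0 := by rw [h4, mul_zero]
  rw [← mul_assoc, hiA2, neg_one_mul, neg_eq_zero] at this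
  exact this

open Matrix in
/-- If `{η₁, …, η_k}` is a normalized tight frame for a left Hilbert
`A`-module `E`, then the matrix `P = (⟨η_i, η_j⟩)` is a projection in `M_k(A)`
(`P = P* = P²`), and the map `U : ξ ↦ (⟨ξ, η_j⟩)_j` is an isomorphism of Hilbert
`A`-modules from `E` onto `A^k P = {v : v ⬝ P = v}`. -/
theorem normalized_tight_frame_projection_matrix
    {A : Type*} [NormedRing A] [StarRing A] [CStarRing A] [NormedAlgebra ℂ A]
    [StarModule ℂ A] [CompleteSpace A] [PartialOrder A] [StarOrderedRing A]
    {E : Type*} [NormedAddCommGroup E] [Module A E] [CompleteSpace E]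
    (Φ : E → E → A)
    (hadd : ∀ x y z : E, Φ (x + y) z = Φ x z + Φ y z)
    (hsmul : ∀ (a : A) (x y : E), Φ (a • x) y = a * Φ x y)
    (hstar : ∀ x y : E, star (Φ x y) = Φ y x)
    (hpos : ∀ x : E, 0 ≤ Φ x x)
    (hdef : ∀ x : E, Φ x x = 0 → x = 0)
    (hnorm : ∀ x : E, ‖x‖ = Real.sqrt ‖Φ x x‖)
    (k : ℕ) (η : Fin k → E)
    (htight : ∀ ξ : E, Φ ξ ξ = ∑ j, Φ ξ (η j) * star (Φ ξ (η j))) :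
    (Matrix.of fun i j : Fin k => Φ (η i) (η j))ᴴ = (Matrix.of fun i j : Fin k => Φ (η i) (η j)) ∧
    (Matrix.of fun i j : Fin k => Φ (η i) (η j)) * (Matrix.of fun i j : Fin k => Φ (η i) (η j)) =
      (Matrix.of fun i j : Fin k => Φ (η i) (η j)) ∧
    Function.Injective (fun (ξ : E) (j : Fin k) => Φ ξ (η j)) ∧
    Set.range (fun (ξ : E) (j : Fin k) => Φ ξ (η j)) =
      {v : Fin k → A | Matrix.vecMul v (Matrix.of fun i j : Fin k => Φ (η i) (η j)) = v} ∧
    (∀ x y : E, (fun j => Φ (x + y) (η j)) = (fun j => Φ x (η j)) + (fun j => Φ y (η j))) ∧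
    (∀ (a : A) (x : E), (fun j => Φ (a • x) (η j)) = fun j => a * Φ x (η j)) ∧
    (∀ x y : E, ∑ j, Φ x (η j) * star (Φ y (η j)) = Φ x y) := by
  -- `Φ · z` as an additive monoid hom
  have hadd2 : ∀ x y z : E, Φ x (y + z) = Φ x y + Φ x z := by
    intro x y z
    rw [← hstar, hadd, star_add, hstar, hstar]
  have hsmul2 : ∀ (a : A) (x y : E), Φ x (a • y) = Φ x y * star a := by
    intro a x y
    rw [← hstar, hsmul, StarMul.star_mul, hstar]
  let F : E → E →+ A := fun z => AddMonoidHom.mk' (fun x => Φ x z) (fun a b => hadd a b z)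
  have hF : ∀ x z, F z x = Φ x z := fun _ _ => rfl
  -- the reconstruction identity, by polarization
  set D : E → E → A := fun x y => Φ x y - ∑ j, Φ x (η j) * star (Φ y (η j)) with hD
  have key : ∀ x y : E, Φ x y = ∑ j, Φ x (η j) * star (Φ y (η j)) := by
    have hpol := polarization_key D
      (fun x => sub_eq_zero.mpr (htight x))
      (by
        intro x y z
        simp only [hD, hadd, add_mul, Finset.sum_add_distrib]
        abel)
      (by
        intro x y z
        simp only [hD, hadd2, hadd, star_add, mul_add, Finset.sum_add_distrib]
        abel)
      (by
        intro a x y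
        simp only [hD, hsmul, mul_sub, Finset.mul_sum, mul_assoc])
      (by
        intro a x y
        simp only [hD, hsmul2, hsmul, StarMul.star_mul, sub_mul, Finset.sum_mul, mul_assoc])
    intro x y
    exact sub_eq_zero.mp (hpol x y)
  refine ⟨?_, ?_, ?_, ?_, ?_, ?_, fun x y => (key x y).symm⟩
  · ext i j
    simp only [Matrix.conjTranspose_apply, Matrix.of_apply]
    rw [hstar]
  · ext i j
    simp only [Matrix.mul_apply, Matrix.of_apply]
    calc ∑ l, Φ (η i) (η l) * Φ (η l) (η j)
        = ∑ l, Φ (η i) (η l) * star (Φ (η j) (η l)) := by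
          simp_rw [hstar]
      _ = Φ (η i) (η j) := (key _ _).symm
  · intro x y hxy
    have hj : ∀ j, Φ x (η j) = Φ y (η j) := fun j => congrFun hxy j
    have hsubj : ∀ j, Φ (x - y) (η j) = 0 := by
      intro j
      rw [← hF, map_sub, hF, hF, hj, sub_self]
    have : Φ (x - y) (x - y) = 0 := by
      rw [key]
      simp [hsubj]
    have := hdef _ this
    exact sub_eq_zero.mp this
  · ext v
    constructor
    · rintro ⟨ξ, rfl⟩
      funext j
      simp only [Matrix.vecMul, dotProduct, Matrix.of_apply]
      calc ∑ i, Φ ξ (η i) * Φ (η i) (η j)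
          = ∑ i, Φ ξ (η i) * star (Φ (η j) (η i)) := by simp_rw [hstar]
        _ = Φ ξ (η j) := (key _ _).symm
    · intro hv
      refine ⟨∑ i, v i • η i, ?_⟩
      funext j
      show Φ (∑ i, v i • η i) (η j) = v j
      have : Φ (∑ i, v i • η i) (η j) = ∑ i, v i * Φ (η i) (η j) := by
        rw [← hF, map_sum]
        simp_rw [hF, hsmul]
      rw [this]
      have := congrFun hv j
      simpa [Matrix.vecMul, dotProduct] using this
  · intro x y
    funext j
    simp [hadd]
  · intro a x
    funext j
    simp [hsmul]
end

section
/- Let E be a Hermitian vector bundle over a compact Hausdorff space X, and let s₁, …, s_k be continuous sections of E. Then {s₁, …, s_k} is a generating set for the left Hilbert C(X)-module Γ(E) of continuous sections if and only if for every x ∈ X, the vectors s₁(x), …, s_k(x) span the fiber E_x. -/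
open Bundle Set Topology

/-!
In a local trivialization the sections `s j` become continuous maps into the model fibre `F`.
If their values span at `x₀`, the linear-combination map `(Fin k → ℂ) → F` is surjective at `x₀`;
composed with a fixed right inverse it becomes an endomorphism of `F` that is invertible at `x₀`,
hence nearby, with inverse depending continuously on the point. This gives continuous local
coefficients for any section, and a partition of unity glues them into global ones.
Conversely, every vector of a fibre is the value of a global continuous section: cut off the
locally constant section through it with an Urysohn function.
-/

section LinearAlgebra

variable {𝕜 : Type*} [NontriviallyNormedField 𝕜] [CompleteSpace 𝕜]
  {F : Type*} [NormedAddCommGroup F] [NormedSpace 𝕜 F] [FiniteDimensional 𝕜 F]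
  {X : Type*} [TopologicalSpace X]

theorem exists_continuousOn_rightInverse {V : Type*} [NormedAddCommGroup V] [NormedSpace 𝕜 V]
    {Φ : X → V →L[𝕜] F} {U : Set X} (hU : IsOpen U) (hΦ : ContinuousOn Φ U) {x₀ : X}
    (hx₀ : x₀ ∈ U) (hsurj : Function.Surjective (Φ x₀)) :
    ∃ N, IsOpen N ∧ x₀ ∈ N ∧ N ⊆ U ∧ ∃ Ψ : X → F →L[𝕜] V,
      ContinuousOn Ψ N ∧ ∀ x ∈ N, Φ x ∘L Ψ x = .id 𝕜 F := by
  have : CompleteSpace F := FiniteDimensional.complete 𝕜 F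
  obtain ⟨R, hR⟩ := (Φ x₀).exists_rightInverse_of_surjective (LinearMap.range_eq_top.2 hsurj)
  set A : X → F →L[𝕜] F := fun x => Φ x ∘L R
  have hA : ContinuousOn A U := hΦ.clm_comp continuousOn_const
  have hA₀ : IsUnit (A x₀) := show IsUnit (Φ x₀ ∘L R) from hR ▸ isUnit_one
  refine ⟨U ∩ A ⁻¹' {a | IsUnit a}, hA.isOpen_inter_preimage hU Units.isOpen, ⟨hx₀, hA₀⟩,
    inter_subset_left, fun x => R ∘L Ring.inverse (A x), ?_, ?_⟩
  · rintro x ⟨hxU, u, hu⟩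
    have hinv : ContinuousAt Ring.inverse (A x) := hu ▸ NormedRing.inverse_continuousAt u
    exact continuousWithinAt_const.clm_comp
      (hinv.comp_continuousWithinAt ((hA x hxU).mono inter_subset_left))
  · rintro x ⟨-, hx⟩
    rw [← ContinuousLinearMap.comp_assoc]
    exact Ring.mul_inverse_cancel _ hx

theorem exists_continuousOn_coeffs_of_span_eq_top {ι : Type*} [Fintype ι] {w : X → ι → F}
    {U : Set X} (hU : IsOpen U) (hw : ContinuousOn w U) {x₀ : X} (hx₀ : x₀ ∈ U)
    (hspan : Submodule.span 𝕜 (range (w x₀)) = ⊤) :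
    ∃ N, IsOpen N ∧ x₀ ∈ N ∧ N ⊆ U ∧ ∃ Ψ : X → F →L[𝕜] (ι → 𝕜),
      ContinuousOn Ψ N ∧ ∀ x ∈ N, ∀ v, ∑ i, Ψ x v i • w x i = v := by
  classical
  let P : ((ι → 𝕜) →L[𝕜] F) ≃L[𝕜] (ι → F) := .piRing ι
  set Φ : X → (ι → 𝕜) →L[𝕜] F := fun x => P.symm (w x)
  have hΦ : ∀ x c, Φ x c = ∑ i, c i • w x i := fun x c =>
    LinearEquiv.piRing_symm_apply (S := 𝕜) (w x) c
  have hsurj : Function.Surjective (Φ x₀) := fun v => by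
    simpa [hΦ] using (Submodule.mem_span_range_iff_exists_fun 𝕜).1 (hspan ▸ Submodule.mem_top)
  obtain ⟨N, hNo, hx₀N, hNU, Ψ, hΨ, hΦΨ⟩ := exists_continuousOn_rightInverse (Φ := Φ) hU
    (P.symm.continuous.comp_continuousOn hw) hx₀ hsurj
  exact ⟨N, hNo, hx₀N, hNU, Ψ, hΨ, fun x hx v => (hΦ x _).symm.trans congr($(hΦΨ x hx) v)⟩

end LinearAlgebra

theorem exists_continuous_coeffs_of_forall_local {𝕜 : Type*} [RCLike 𝕜]
    {X : Type*} [TopologicalSpace X] [NormalSpace X] [ParacompactSpace X]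
    {M : X → Type*} [∀ x, AddCommGroup (M x)] [∀ x, Module 𝕜 (M x)]
    {ι : Type*} [Fintype ι] {s : ι → ∀ x, M x} {t : ∀ x, M x}
    (hloc : ∀ x₀, ∃ N, IsOpen N ∧ x₀ ∈ N ∧ ∃ g : X → ι → 𝕜,
      ContinuousOn g N ∧ ∀ x ∈ N, t x = ∑ j, g x j • s j x) :
    ∃ f : ι → C(X, 𝕜), ∀ x, t x = ∑ j, f j x • s j x := by
  choose N hNo hxN g hg hgt using hloc
  obtain ⟨ρ, hρ⟩ := PartitionOfUnity.exists_isSubordinate isClosed_univ N hNo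
    fun x _ => mem_iUnion.2 ⟨x, hxN x⟩
  refine ⟨fun j => ⟨fun x => ∑ᶠ i, ρ i x • g i x j,
    hρ.continuous_finsum_smul hNo fun i => continuousOn_pi.1 (hg i) j⟩, fun x => ?_⟩
  have hmem : ∀ i ∈ ρ.finsupport x, x ∈ N i := fun i hi =>
    hρ i (subset_tsupport _ ((ρ.mem_finsupport x).1 hi))
  calc t x = ((∑ i ∈ ρ.finsupport x, ρ i x : ℝ) : 𝕜) • t x := by
        rw [ρ.sum_finsupport (mem_univ x), RCLike.ofReal_one, one_smul]
    _ = ∑ i ∈ ρ.finsupport x, ((ρ i x : ℝ) : 𝕜) • ∑ j, g i x j • s j x := by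
        rw [RCLike.ofReal_sum, Finset.sum_smul]
        exact Finset.sum_congr rfl fun i hi => by rw [← hgt i x (hmem i hi)]
    _ = ∑ j, (∑ i ∈ ρ.finsupport x, ρ i x • g i x j) • s j x := by
        simp only [Finset.smul_sum, Finset.sum_smul, smul_smul, RCLike.real_smul_eq_coe_mul]
        exact Finset.sum_comm
    _ = ∑ j, (∑ᶠ i, ρ i x • g i x j) • s j x := Finset.sum_congr rfl fun j _ => by
        rw [ρ.sum_finsupport_smul_eq_finsum fun i y => g i y j]

section VectorBundle

variable {𝕜 : Type*} [RCLike 𝕜] {B : Type*} [TopologicalSpace B]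
  {F : Type*} [NormedAddCommGroup F] [NormedSpace 𝕜 F]
  {E : B → Type*} [∀ x, AddCommGroup (E x)] [∀ x, Module 𝕜 (E x)]
  [TopologicalSpace (TotalSpace F E)]

theorem Bundle.Trivialization.continuousOn_section_iff (e : Trivialization F (π F E))
    {u : ∀ x, E x} {U : Set B} (hU : U ⊆ e.baseSet) :
    ContinuousOn (fun x => TotalSpace.mk' F x (u x)) U ↔
      ContinuousOn (fun x => (e ⟨x, u x⟩).2) U := by
  refine ⟨fun h => ?_, fun h => ?_⟩
  · exact continuous_snd.comp_continuousOn
      (e.continuousOn.comp h fun x hx => e.mem_source.2 (hU hx))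
  · refine (e.continuousOn_symm.comp (continuousOn_id.prodMk h)
      fun x hx => ⟨hU hx, mem_univ _⟩).congr fun x hx => ?_
    simp [e.symm_apply_apply_mk (hU hx)]

variable [∀ x, TopologicalSpace (E x)] [FiberBundle F E] [VectorBundle 𝕜 F E]

theorem Bundle.Trivialization.continuous_smul_symm_of_tsupport_subset
    (e : Trivialization F (π F E)) [e.IsLinear 𝕜] {φ : B → 𝕜} (hφ : Continuous φ)
    (hsupp : tsupport φ ⊆ e.baseSet) (w : F) :
    Continuous fun x => TotalSpace.mk' F x (φ x • e.symm x w) := by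
  refine continuous_iff_continuousAt.2 fun x => ?_
  by_cases hx : x ∈ e.baseSet
  · refine ((e.continuousOn_section_iff subset_rfl).2 ?_).continuousAt
      (e.open_baseSet.mem_nhds hx)
    refine (hφ.continuousOn.smul (continuousOn_const (c := w))).congr fun y hy => ?_
    exact ((e.continuousLinearEquivAt 𝕜 y hy).map_smul (φ y) (e.symm y w)).trans
      (by simp [e.apply_mk_symm hy])
  · have hφx : φ =ᶠ[𝓝 x] 0 := notMem_tsupport_iff_eventuallyEq.1 fun h => hx (hsupp h)
    refine (continuous_zeroSection 𝕜 (F := F) (E := E)).continuousAt.congr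
      (hφx.mono fun y hy => ?_)
    simp [zeroSection, hy]

theorem Bundle.Trivialization.exists_continuous_section_apply_eq [CompactSpace B] [T2Space B]
    (e : Trivialization F (π F E)) [e.IsLinear 𝕜] {x₀ : B} (hx₀ : x₀ ∈ e.baseSet) (v : E x₀) :
    ∃ r : ∀ x, E x, Continuous (fun x => TotalSpace.mk' F x (r x)) ∧ r x₀ = v := by
  obtain ⟨φ, hφsupp, hφ1, -⟩ := exists_tsupport_one_of_isOpen_isClosed e.open_baseSet
    isClosed_closure.isCompact isClosed_singleton (singleton_subset_iff.2 hx₀)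
  refine ⟨fun x => (φ x : 𝕜) • e.symm x (e ⟨x₀, v⟩).2,
    e.continuous_smul_symm_of_tsupport_subset (RCLike.continuous_ofReal.comp φ.continuous)
      ((tsupport_comp_subset RCLike.ofReal_zero φ).trans hφsupp) _, ?_⟩
  simp [hφ1 (mem_singleton x₀), e.symm_apply_apply_mk hx₀]

theorem exists_continuousOn_section_coeffs_of_span_eq_top {ι : Type*} [Fintype ι]
    {s : ι → ∀ x, E x} (hs : ∀ j, Continuous fun x => TotalSpace.mk' F x (s j x)) {t : ∀ x, E x}
    (ht : Continuous fun x => TotalSpace.mk' F x (t x)) {x₀ : B}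
    (hspan : Submodule.span 𝕜 (range fun j => s j x₀) = ⊤) :
    ∃ N, IsOpen N ∧ x₀ ∈ N ∧ ∃ g : B → ι → 𝕜,
      ContinuousOn g N ∧ ∀ x ∈ N, t x = ∑ j, g x j • s j x := by
  set e := trivializationAt F E x₀
  have hx₀ : x₀ ∈ e.baseSet := FiberBundle.mem_baseSet_trivializationAt F E x₀
  let L : ∀ x ∈ e.baseSet, E x ≃L[𝕜] F := fun x hx => e.continuousLinearEquivAt 𝕜 x hx
  have hcoord {u : ∀ x, E x} (hu : Continuous fun x => TotalSpace.mk' F x (u x)) :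
      ContinuousOn (fun x => (e ⟨x, u x⟩).2) e.baseSet :=
    (e.continuousOn_section_iff subset_rfl).1 hu.continuousOn
  have hspanF : Submodule.span 𝕜 (range fun j => (e ⟨x₀, s j x₀⟩).2) = ⊤ := by
    rw [← (L x₀ hx₀).toLinearEquiv.range, ← Submodule.map_top, ← hspan, Submodule.map_span,
      ← range_comp]
    rfl
  have : FiniteDimensional 𝕜 F :=
    Module.finite_def.2 (Submodule.fg_def.2 ⟨_, finite_range _, hspanF⟩)
  obtain ⟨N, hNo, hx₀N, hNe, Ψ, hΨ, hΨw⟩ := exists_continuousOn_coeffs_of_span_eq_top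
    e.open_baseSet (continuousOn_pi.2 fun j => hcoord (hs j)) hx₀ hspanF
  refine ⟨N, hNo, hx₀N, fun x => Ψ x (e ⟨x, t x⟩).2, hΨ.clm_apply ((hcoord ht).mono hNe),
    fun x hx => (L x (hNe hx)).injective ?_⟩
  simp [L, map_sum, map_smul, hΨw x hx]

end VectorBundle

theorem sections_generate_iff_fiberwise_spanning_general
    {X : Type*} [TopologicalSpace X] [CompactSpace X] [T2Space X]
    {F : Type*} [NormedAddCommGroup F] [NormedSpace ℂ F]
    {E : X → Type*} [∀ x, AddCommGroup (E x)] [∀ x, Module ℂ (E x)]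
    [∀ x, TopologicalSpace (E x)] [TopologicalSpace (TotalSpace F E)]
    [FiberBundle F E] [VectorBundle ℂ F E]
    (k : ℕ) (s : Fin k → (∀ x, E x))
    (hs : ∀ j, Continuous (fun x => (TotalSpace.mk x (s j x) : TotalSpace F E))) :
    (∀ t : ∀ x, E x, Continuous (fun x => (TotalSpace.mk x (t x) : TotalSpace F E)) →
        ∃ f : Fin k → C(X, ℂ), ∀ x, t x = ∑ j, f j x • s j x) ↔
      (∀ x, Submodule.span ℂ (Set.range fun j => s j x) = ⊤) := by
  refine ⟨fun hgen x => eq_top_iff.2 fun v _ => ?_, fun hspan t ht =>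
    exists_continuous_coeffs_of_forall_local fun x₀ =>
      exists_continuousOn_section_coeffs_of_span_eq_top hs ht (hspan x₀)⟩
  obtain ⟨r, hr, rfl⟩ := (trivializationAt F E x).exists_continuous_section_apply_eq (𝕜 := ℂ)
    (FiberBundle.mem_baseSet_trivializationAt F E x) v
  obtain ⟨f, hf⟩ := hgen r hr
  rw [hf x]
  exact (Submodule.mem_span_range_iff_exists_fun ℂ).2 ⟨fun j => f j x, rfl⟩

/-- For a Hermitian vector bundle `E` over a compact Hausdorff space `X`,
finitely many continuous sections `s₁, …, s_k` generate the Hilbert `C(X)`-module `Γ(E)`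
of continuous sections if and only if the vectors `s₁(x), …, s_k(x)` span the fiber `E x`
for every `x ∈ X`. -/
theorem sections_generate_iff_fiberwise_spanning
    {X : Type*} [TopologicalSpace X] [CompactSpace X] [T2Space X]
    {F : Type*} [NormedAddCommGroup F] [NormedSpace ℂ F]
    {E : X → Type*} [∀ x, AddCommGroup (E x)] [∀ x, Module ℂ (E x)]
    [∀ x, TopologicalSpace (E x)] [TopologicalSpace (TotalSpace F E)]
    [FiberBundle F E] [VectorBundle ℂ F E]
    -- a continuously varying Hermitian inner product on the fibers:
    (ip : ∀ x, E x → E x → ℂ)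
    (hip_conj : ∀ x (u v : E x), (starRingEnd ℂ) (ip x u v) = ip x v u)
    (hip_add : ∀ x (u v w : E x), ip x (u + v) w = ip x u w + ip x v w)
    (hip_smul : ∀ x (c : ℂ) (u v : E x), ip x (c • u) v = (starRingEnd ℂ) c * ip x u v)
    (hip_pos : ∀ x (v : E x), v ≠ 0 → 0 < (ip x v v).re)
    (hip_cont : ∀ s t : (∀ x, E x),
      Continuous (fun x => (TotalSpace.mk x (s x) : TotalSpace F E)) →
      Continuous (fun x => (TotalSpace.mk x (t x) : TotalSpace F E)) →
      Continuous fun x => ip x (s x) (t x))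
    (k : ℕ) (s : Fin k → (∀ x, E x))
    (hs : ∀ j, Continuous (fun x => (TotalSpace.mk x (s j x) : TotalSpace F E))) :
    (∀ t : ∀ x, E x, Continuous (fun x => (TotalSpace.mk x (t x) : TotalSpace F E)) →
        ∃ f : Fin k → C(X, ℂ), ∀ x, t x = ∑ j, f j x • s j x) ↔
      (∀ x, Submodule.span ℂ (Set.range fun j => s j x) = ⊤) :=
  sections_generate_iff_fiberwise_spanning_general k s hs
end

section
/- Let Λ be a lattice in a locally compact abelian group G, B a fundamental domain for Λ in G, and J_B(x,ω) = conj(ω(⌊x⌋_B)). If f : G → ℂ is a continuous Λ-periodic function vanishing on ∂B, then the function G(x,ω) = f(x)J_B(x,ω) is a continuous quasiperiodic function on G × Ĝ, i.e., G is continuous and satisfies G(xλ, ωτ) = conj(ω(λ)) G(x,ω) for all λ ∈ Λ, τ ∈ Λ^⊥. -/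
/-- The annihilator `Λ^⊥ ⊆ Ĝ` of a subgroup `Λ ⊆ G`. -/
def annih {G : Type*} [CommGroup G] [TopologicalSpace G] [IsTopologicalGroup G]
    (Λ : Subgroup G) : Subgroup (PontryaginDual G) where
  carrier := {ω | ∀ l ∈ Λ, ω l = 1}
  one_mem' := by intro l _; rfl
  mul_mem' := by
    intro a b ha hb l hl
    have : (a * b) l = a l * b l := rfl
    rw [this, ha l hl, hb l hl, mul_one]
  inv_mem' := by
    intro a ha l hl
    have : (a⁻¹ : PontryaginDual _) l = (a l)⁻¹ := rfl
    rw [this, ha l hl, inv_one]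

/-!
Where `x⌊x⌋_B⁻¹` lies in the interior of `B`, the floor `⌊·⌋_B` is locally constant, so near
`(x, ω)` the function is `f(y) · conj(η(⌊x⌋_B))`, which is jointly continuous. Otherwise
`x⌊x⌋_B⁻¹ ∈ ∂B`, so `f x = 0` by periodicity, and since `|J_B| = 1` the product tends to `0`
there anyway. Quasiperiodicity follows from `⌊xλ⌋_B = ⌊x⌋_B λ` and `τ` being trivial on `Λ`.
-/

open Filter Topology ComplexConjugate

namespace IsFundDomain

variable {G : Type*} [Group G] {Λ : Subgroup G} {B : Set G}

theorem eq_of_mul_inv_mem (hB : IsFundDomain Λ B) {x : G} {l l' : Λ}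
    (hl : x * (l : G)⁻¹ ∈ B) (hl' : x * (l' : G)⁻¹ ∈ B) : l = l' := by
  obtain ⟨p, -, hu⟩ := hB x
  exact congrArg Prod.snd <|
    (hu (⟨_, hl⟩, l) (by simp)).trans (hu (⟨_, hl'⟩, l') (by simp)).symm

variable {fl : G → Λ}

theorem floor_mul (hB : IsFundDomain Λ B) (hfl : ∀ x, x * (fl x : G)⁻¹ ∈ B) (x : G) (l : Λ) :
    fl (x * l) = fl x * l :=
  hB.eq_of_mul_inv_mem (hfl _) (by simpa [mul_assoc] using hfl x)

theorem eventually_floor_eq [TopologicalSpace G] [ContinuousMul G] (hB : IsFundDomain Λ B)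
    (hfl : ∀ x, x * (fl x : G)⁻¹ ∈ B) {x : G} (hx : x * (fl x : G)⁻¹ ∈ interior B) :
    ∀ᶠ y in 𝓝 x, fl y = fl x := by
  filter_upwards [(continuous_mul_const _).continuousAt.preimage_mem_nhds
    (isOpen_interior.mem_nhds hx)] with y hy
  exact hB.eq_of_mul_inv_mem (hfl y) (interior_subset hy)

end IsFundDomain

instance PontryaginDual.instContinuousEvalConst {G : Type*} [CommGroup G] [TopologicalSpace G]
    [IsTopologicalGroup G] : ContinuousEvalConst (PontryaginDual G) G Circle :=
  inferInstanceAs (ContinuousEvalConst (G →ₜ* Circle) G Circle)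

theorem mul_apply_of_mem_annih {G : Type*} [CommGroup G] [TopologicalSpace G] [IsTopologicalGroup G]
    {Λ : Subgroup G} (ω : PontryaginDual G) {τ : PontryaginDual G} (hτ : τ ∈ annih Λ)
    {l : G} (hl : l ∈ Λ) : (ω * τ) l = ω l := by
  change ω l * τ l = ω l
  rw [hτ l hl, mul_one]

theorem ContinuousAt.mul_of_eq_zero_of_norm_le {X R : Type*} [TopologicalSpace X]
    [NonUnitalSeminormedRing R] {F g : X → R} {x : X} {C : ℝ} (hF : ContinuousAt F x)
    (hFx : F x = 0) (hg : ∀ y, ‖g y‖ ≤ C) : ContinuousAt (fun y => F y * g y) x := by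
  show Tendsto _ _ (𝓝 (F x * g x))
  rw [hFx, zero_mul]
  have hF0 : Tendsto F (𝓝 x) (𝓝 0) := hFx ▸ hF
  exact hF0.zero_mul_isBoundedUnder_le ⟨C, eventually_map.2 (.of_forall hg)⟩

theorem mul_JB_continuous_quasiperiodic_general
    {G : Type*} [CommGroup G] [TopologicalSpace G] [IsTopologicalGroup G]
    (Λ : Subgroup G)
    (B : Set G) (hB : IsFundDomain Λ B)
    (fl : G → Λ) (hfl : ∀ x : G, x * ((fl x : G))⁻¹ ∈ B)
    (f : G → ℂ) (hf_cont : Continuous f)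
    (hf_per : ∀ (x : G) (l : Λ), f (x * l) = f x)
    (hf_bdry : ∀ x ∈ frontier B, f x = 0) :
    Continuous (fun p : G × PontryaginDual G =>
        f p.1 * (starRingEnd ℂ) ((p.2 (fl p.1 : G) : ℂ))) ∧
    (∀ (x : G) (ω : PontryaginDual G) (l : Λ) (τ : annih Λ),
      f (x * l) * (starRingEnd ℂ) (((ω * (τ : PontryaginDual G)) (fl (x * l) : G) : ℂ)) =
        (starRingEnd ℂ) ((ω (l : G) : ℂ)) *
          (f x * (starRingEnd ℂ) ((ω (fl x : G) : ℂ)))) := by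
  refine ⟨continuous_iff_continuousAt.2 fun ⟨x, ω⟩ => ?_, fun x ω l τ => ?_⟩
  · by_cases hx : x * (fl x : G)⁻¹ ∈ interior B
    · have hcont : Continuous fun p : G × PontryaginDual G =>
          f p.1 * conj (p.2 (fl x : G) : ℂ) := by
        fun_prop
      refine hcont.continuousAt.congr ?_
      filter_upwards [continuousAt_fst.eventually (hB.eventually_floor_eq hfl hx)] with p hp
      rw [hp]
    · have hfx : f x = 0 := by
        have hbdry : x * (fl x : G)⁻¹ ∈ frontier B := ⟨subset_closure (hfl x), hx⟩
        simpa using (hf_per _ (fl x)).trans (hf_bdry _ hbdry)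
      refine (hf_cont.comp continuous_fst).continuousAt.mul_of_eq_zero_of_norm_le hfx
        (C := 1) fun p => by simp [Circle.norm_coe]
  · rw [hf_per, hB.floor_mul hfl, Subgroup.coe_mul,
      mul_apply_of_mem_annih ω τ.2 (Λ.mul_mem (fl x).2 l.2), map_mul, Circle.coe_mul, map_mul]
    ring

/-- If `f : G → ℂ` is continuous, `Λ`-periodic and vanishes on `∂B`,
then `G(x,ω) = f(x) · conj(ω(⌊x⌋_B))` is a continuous quasiperiodic function on `G × Ĝ`. -/
theorem mul_JB_continuous_quasiperiodic
    {G : Type*} [CommGroup G] [TopologicalSpace G] [IsTopologicalGroup G]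
    [LocallyCompactSpace G] [T2Space G]
    (Λ : Subgroup G) [DiscreteTopology Λ] [CompactSpace (G ⧸ Λ)]
    (B : Set G) (hB : IsFundDomain Λ B)
    (fl : G → Λ) (hfl : ∀ x : G, x * ((fl x : G))⁻¹ ∈ B)
    (f : G → ℂ) (hf_cont : Continuous f)
    (hf_per : ∀ (x : G) (l : Λ), f (x * l) = f x)
    (hf_bdry : ∀ x ∈ frontier B, f x = 0) :
    Continuous (fun p : G × PontryaginDual G =>
        f p.1 * (starRingEnd ℂ) ((p.2 (fl p.1 : G) : ℂ))) ∧
    (∀ (x : G) (ω : PontryaginDual G) (l : Λ) (τ : annih Λ),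
      f (x * l) * (starRingEnd ℂ) (((ω * (τ : PontryaginDual G)) (fl (x * l) : G) : ℂ)) =
        (starRingEnd ℂ) ((ω (l : G) : ℂ)) *
          (f x * (starRingEnd ℂ) ((ω (fl x : G) : ℂ)))) :=
  mul_JB_continuous_quasiperiodic_general Λ B hB fl hfl f hf_cont hf_per hf_bdry
end

section
/- Let G be a second countable locally compact abelian group that is compact or discrete, and Λ any lattice in G. Then the line bundle E_{G,Λ} over (G/Λ)×(Ĝ/Λ^⊥) is trivial. In particular, when G is compact, Λ is finite and the map φ([x, ω_k, z]) = ([x], ω_k(x)z) defines a trivialization of E_{G,Λ} restricted to each component (G/Λ)×{[ω_k]}. -/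
/-- The relation on `G × Ĝ × ℂ` defining the Heisenberg line bundle `E_{G,Λ}`. -/
def heisRel {G : Type*} [CommGroup G] [TopologicalSpace G] [IsTopologicalGroup G]
    (Λ : Subgroup G) :
    (G × PontryaginDual G × ℂ) → (G × PontryaginDual G × ℂ) → Prop :=
  fun p q => ∃ (l : Λ) (τ : annih Λ),
    q.1 = p.1 * l ∧ q.2.1 = p.2.1 * (τ : PontryaginDual G) ∧
    q.2.2 = (starRingEnd ℂ) ((p.2.1 (l : G) : ℂ)) * p.2.2


theorem Function.Bijective.bijOn_fiber {E A B C : Type*} {t : E → (A × B) × C}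
    (ht : Function.Bijective t) (b : B) :
    Set.BijOn (fun e => ((t e).1.1, (t e).2)) {e | (t e).1.2 = b} Set.univ := by
  refine ⟨fun _ _ => trivial, fun e he e' he' h => ht.1 ?_, ?_⟩
  · simp only [Prod.mk.injEq] at h
    exact Prod.ext (Prod.ext h.1 (he.trans he'.symm)) h.2
  · rintro ⟨a, w⟩ -
    obtain ⟨e, he⟩ := ht.2 ((a, b), w)
    exact ⟨e, by simp [he], by simp [he]⟩

section HeisenbergBundle

open QuotientGroup

variable {G : Type*} [CommGroup G] [TopologicalSpace G] [IsTopologicalGroup G]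

theorem heisRel_mk_mul_mul (Λ : Subgroup G) (x : G) (ω : PontryaginDual G) (z : ℂ)
    {l : G} (hl : l ∈ Λ) {τ : PontryaginDual G} (hτ : τ ∈ annih Λ) :
    Quot.mk (heisRel Λ) (x * l, ω * τ, ((ω l)⁻¹ : Circle) * z) = Quot.mk (heisRel Λ) (x, ω, z) :=
  (Quot.sound ⟨⟨l, hl⟩, ⟨τ, hτ⟩, rfl, rfl, congrArg (· * z) (Circle.coe_inv_eq_conj _)⟩).symm

structure IsHeisenbergMultiplier (Λ : Subgroup G) (c : G × PontryaginDual G → Circle) :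
    Prop where
  continuous : Continuous c
  map_mul_mul : ∀ x ω, ∀ l ∈ Λ, ∀ τ ∈ annih Λ, c (x * l, ω * τ) = c (x, ω) * ω l

namespace IsHeisenbergMultiplier

variable {Λ : Subgroup G} {c : G × PontryaginDual G → Circle}

theorem quot_mk_inv_mul_eq (hc : IsHeisenbergMultiplier Λ c) {x y : G} {ω χ : PontryaginDual G}
    (hxy : x⁻¹ * y ∈ Λ) (hωχ : ω⁻¹ * χ ∈ annih Λ) (w : ℂ) :
    Quot.mk (heisRel Λ) (x, ω, ((c (x, ω))⁻¹ : Circle) * w) =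
      Quot.mk (heisRel Λ) (y, χ, ((c (y, χ))⁻¹ : Circle) * w) := by
  obtain ⟨l, hl, rfl⟩ : ∃ l ∈ Λ, y = x * l := ⟨_, hxy, (mul_inv_cancel_left x y).symm⟩
  obtain ⟨τ, hτ, rfl⟩ : ∃ τ ∈ annih Λ, χ = ω * τ := ⟨_, hωχ, (mul_inv_cancel_left ω χ).symm⟩
  rw [← heisRel_mk_mul_mul Λ x ω _ hl hτ, hc.map_mul_mul x ω l hl τ hτ]
  congr 3
  simp only [Circle.coe_inv, Circle.coe_mul]
  ring

noncomputable def trivialization (hc : IsHeisenbergMultiplier Λ c) :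
    Quot (heisRel Λ) ≃ₜ ((G ⧸ Λ) × (PontryaginDual G ⧸ annih Λ)) × ℂ where
  toFun := Quot.lift
    (fun p => (((p.1 : G ⧸ Λ), (p.2.1 : PontryaginDual G ⧸ annih Λ)), c (p.1, p.2.1) * p.2.2)) <| by
    rintro ⟨x, ω, z⟩ ⟨_, _, _⟩ ⟨⟨l, hl⟩, ⟨τ, hτ⟩, rfl, rfl, rfl⟩
    simp only [mk_mul_of_mem x hl, mk_mul_of_mem ω hτ, hc.map_mul_mul x ω l hl τ hτ,
      ← Circle.coe_inv_eq_conj, Circle.coe_mul, Circle.coe_inv]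
    field_simp
  invFun q := Quotient.liftOn₂' q.1.1 q.1.2
    (fun x ω => Quot.mk (heisRel Λ) (x, ω, ((c (x, ω))⁻¹ : Circle) * q.2))
    fun _ _ _ _ hx hω => hc.quot_mk_inv_mul_eq (leftRel_apply.mp hx) (leftRel_apply.mp hω) q.2
  left_inv := by
    rintro ⟨x, ω, z⟩
    show Quot.mk _ (x, ω, ((c (x, ω))⁻¹ : Circle) * ((c (x, ω) : ℂ) * z)) = _
    rw [Circle.coe_inv, inv_mul_cancel_left₀ (Circle.coe_ne_zero _)]
  right_inv := by
    rintro ⟨⟨a, b⟩, w⟩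
    induction a using QuotientGroup.induction_on
    induction b using QuotientGroup.induction_on
    show (((_ : G ⧸ Λ), (_ : PontryaginDual G ⧸ annih Λ)), _ * (((c _)⁻¹ : Circle) * w)) = _
    rw [Circle.coe_inv, mul_inv_cancel_left₀ (Circle.coe_ne_zero _)]
  continuous_toFun := by
    refine continuous_quot_lift _ (.prodMk (.prodMk ?_ ?_) ?_)
    · exact continuous_quotient_mk'.comp continuous_fst
    · exact continuous_quotient_mk'.comp continuous_snd.fst
    · exact (continuous_subtype_val.comp (hc.continuous.comp
        (continuous_fst.prodMk continuous_snd.fst))).mul continuous_snd.snd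
  continuous_invFun := by
    have hΦ := (isOpenQuotientMap_mk (N := Λ)).prodMap (isOpenQuotientMap_mk (N := annih Λ))
      |>.prodMap (IsOpenQuotientMap.id (X := ℂ))
    rw [← hΦ.continuous_comp_iff]
    refine continuous_quot_mk.comp (continuous_fst.fst.prodMk (continuous_fst.snd.prodMk ?_))
    exact (continuous_subtype_val.comp (hc.continuous.comp continuous_fst).inv).mul
      continuous_snd

@[simp]
theorem trivialization_mk (hc : IsHeisenbergMultiplier Λ c) (x : G) (ω : PontryaginDual G)
    (z : ℂ) : hc.trivialization (Quot.mk _ (x, ω, z)) =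
      (((x : G ⧸ Λ), (ω : PontryaginDual G ⧸ annih Λ)), c (x, ω) * z) :=
  rfl

end IsHeisenbergMultiplier

theorem isHeisenbergMultiplier_of_rightInverse_dual [DiscreteTopology (PontryaginDual G)]
    (Λ : Subgroup G) {σ : PontryaginDual G ⧸ annih Λ → PontryaginDual G}
    (hσ : Function.RightInverse σ QuotientGroup.mk) :
    IsHeisenbergMultiplier Λ fun p => σ p.2 p.1 where
  continuous := by
    have hev : Continuous fun q : PontryaginDual G × G => q.1 q.2 :=
      continuous_prod_of_discrete_left.mpr fun χ => map_continuous χ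
    exact hev.comp (((continuous_of_discreteTopology (f := fun ω : PontryaginDual G => σ ω)).comp
      continuous_snd).prodMk continuous_fst)
  map_mul_mul x ω l hl τ hτ := by
    have hσω : ω⁻¹ * σ ω ∈ annih Λ := QuotientGroup.eq.mp (hσ ω).symm
    have hl' : (ω l)⁻¹ * σ ω l = 1 := hσω l hl
    simp only [mk_mul_of_mem ω hτ, map_mul, (inv_mul_eq_one.mp hl').symm]

theorem isHeisenbergMultiplier_of_rightInverse [DiscreteTopology G]
    (Λ : Subgroup G) {σ : G ⧸ Λ → G} (hσ : Function.RightInverse σ QuotientGroup.mk) :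
    IsHeisenbergMultiplier Λ fun p => p.2 (p.1 * (σ p.1)⁻¹) where
  continuous := continuous_prod_of_discrete_left.mpr fun x =>
    continuous_eval_const (F := G →ₜ* Circle) (x * (σ x)⁻¹)
  map_mul_mul x ω l hl τ hτ := by
    have hx : x * (σ x)⁻¹ ∈ Λ := by
      simpa [mul_comm] using Λ.inv_mem (QuotientGroup.eq.mp (hσ x).symm)
    have hτx : τ (x * (σ x)⁻¹) = 1 := hτ _ hx
    have hmul : ∀ y, (ω * τ) y = ω y * τ y := fun _ => rfl
    rw [mk_mul_of_mem x hl, mul_right_comm x l, map_mul, hmul, hmul, hτx, hτ l hl, mul_one,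
      mul_one]

theorem exists_isHeisenbergMultiplier_apply_eq [CompactSpace G] (Λ : Subgroup G)
    (ω₀ : PontryaginDual G) :
    ∃ c, IsHeisenbergMultiplier Λ c ∧ ∀ x, c (x, ω₀) = ω₀ x := by
  classical
  let σ := Function.update Quotient.out (ω₀ : PontryaginDual G ⧸ annih Λ) ω₀
  have hσ : Function.RightInverse σ QuotientGroup.mk := fun q => by
    by_cases h : q = (ω₀ : PontryaginDual G ⧸ annih Λ) <;> simp [σ, h]
  exact ⟨_, isHeisenbergMultiplier_of_rightInverse_dual Λ hσ, fun x => by simp [σ]⟩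

end HeisenbergBundle

theorem heisenberg_bundle_trivial_of_compact_or_discrete_general
    {G : Type*} [CommGroup G] [TopologicalSpace G] [IsTopologicalGroup G]
    (Λ : Subgroup G)
    (hG : CompactSpace G ∨ DiscreteTopology G)
    (π : Quot (heisRel Λ) → (G ⧸ Λ) × (PontryaginDual G ⧸ annih Λ))
    (hπ : ∀ (x : G) (ω : PontryaginDual G) (z : ℂ),
      π (Quot.mk (heisRel Λ) (x, ω, z)) = (QuotientGroup.mk x, QuotientGroup.mk ω)) :
    (∃ t : Quot (heisRel Λ) → ((G ⧸ Λ) × (PontryaginDual G ⧸ annih Λ)) × ℂ,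
      IsHomeomorph t ∧
      (∀ e : Quot (heisRel Λ), (t e).1 = π e) ∧
      (∀ (x : G) (ω : PontryaginDual G) (z w : ℂ),
        (t (Quot.mk (heisRel Λ) (x, ω, z + w))).2 =
          (t (Quot.mk (heisRel Λ) (x, ω, z))).2 + (t (Quot.mk (heisRel Λ) (x, ω, w))).2) ∧
      (∀ (x : G) (ω : PontryaginDual G) (z c : ℂ),
        (t (Quot.mk (heisRel Λ) (x, ω, c * z))).2 =
          c * (t (Quot.mk (heisRel Λ) (x, ω, z))).2)) ∧
    (CompactSpace G → ∀ ω₀ : PontryaginDual G,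
      ∃ φt : Quot (heisRel Λ) → (G ⧸ Λ) × ℂ,
        (∀ (x : G) (z : ℂ),
          φt (Quot.mk (heisRel Λ) (x, ω₀, z)) = (QuotientGroup.mk x, ((ω₀ x : ℂ)) * z)) ∧
        ContinuousOn φt {e | (π e).2 = QuotientGroup.mk ω₀} ∧
        Set.BijOn φt {e | (π e).2 = QuotientGroup.mk ω₀} Set.univ) := by
  have triv_fst : ∀ {c} (hc : IsHeisenbergMultiplier Λ c) e, (hc.trivialization e).1 = π e := by
    rintro c hc ⟨x, ω, z⟩
    exact (hπ x ω z).symm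
  refine ⟨?_, fun _ ω₀ => ?_⟩
  · obtain ⟨c, hc⟩ : ∃ c, IsHeisenbergMultiplier Λ c := by
      rcases hG with hG | hG
      · exact (exists_isHeisenbergMultiplier_apply_eq Λ 1).imp fun _ => And.left
      · exact ⟨_, isHeisenbergMultiplier_of_rightInverse Λ QuotientGroup.out_eq'⟩
    exact ⟨hc.trivialization, hc.trivialization.isHomeomorph, triv_fst hc,
      fun x ω z w => by simp [mul_add], fun x ω z c => by simp [mul_left_comm]⟩
  · obtain ⟨c, hc, hcω₀⟩ := exists_isHeisenbergMultiplier_apply_eq Λ ω₀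
    let t := hc.trivialization
    refine ⟨fun e => ((t e).1.1, (t e).2), fun x z => by simp [t, hcω₀], ?_, ?_⟩
    · exact (t.continuous.fst.fst.prodMk t.continuous.snd).continuousOn
    · simpa only [t, triv_fst hc] using t.bijective.bijOn_fiber (QuotientGroup.mk ω₀)

/-- If `G` is a second countable LCA group that is compact or discrete,
and `Λ` is any lattice in `G`, then the Heisenberg line bundle `E_{G,Λ}` over
`X = (G/Λ) × (Ĝ/Λ^⊥)` is trivial (there is a global fiberwise-linear homeomorphic
trivialization `t : E_{G,Λ} → X × ℂ` over `π`). In particular, when `G` is compact,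
`[x, ω₀, z] ↦ ([x], ω₀(x)·z)` trivializes `E_{G,Λ}` over each component
`(G/Λ) × {[ω₀]}`. -/
theorem heisenberg_bundle_trivial_of_compact_or_discrete
    {G : Type*} [CommGroup G] [TopologicalSpace G] [IsTopologicalGroup G]
    [LocallyCompactSpace G] [T2Space G] [SecondCountableTopology G]
    (Λ : Subgroup G) [DiscreteTopology Λ] [CompactSpace (G ⧸ Λ)]
    (hG : CompactSpace G ∨ DiscreteTopology G)
    (π : Quot (heisRel Λ) → (G ⧸ Λ) × (PontryaginDual G ⧸ annih Λ))
    (hπ : ∀ (x : G) (ω : PontryaginDual G) (z : ℂ),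
      π (Quot.mk (heisRel Λ) (x, ω, z)) = (QuotientGroup.mk x, QuotientGroup.mk ω)) :
    (∃ t : Quot (heisRel Λ) → ((G ⧸ Λ) × (PontryaginDual G ⧸ annih Λ)) × ℂ,
      IsHomeomorph t ∧
      (∀ e : Quot (heisRel Λ), (t e).1 = π e) ∧
      (∀ (x : G) (ω : PontryaginDual G) (z w : ℂ),
        (t (Quot.mk (heisRel Λ) (x, ω, z + w))).2 =
          (t (Quot.mk (heisRel Λ) (x, ω, z))).2 + (t (Quot.mk (heisRel Λ) (x, ω, w))).2) ∧
      (∀ (x : G) (ω : PontryaginDual G) (z c : ℂ),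
        (t (Quot.mk (heisRel Λ) (x, ω, c * z))).2 =
          c * (t (Quot.mk (heisRel Λ) (x, ω, z))).2)) ∧
    (CompactSpace G → ∀ ω₀ : PontryaginDual G,
      ∃ φt : Quot (heisRel Λ) → (G ⧸ Λ) × ℂ,
        (∀ (x : G) (z : ℂ),
          φt (Quot.mk (heisRel Λ) (x, ω₀, z)) = (QuotientGroup.mk x, ((ω₀ x : ℂ)) * z)) ∧
        ContinuousOn φt {e | (π e).2 = QuotientGroup.mk ω₀} ∧
        Set.BijOn φt {e | (π e).2 = QuotientGroup.mk ω₀} Set.univ) :=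
  heisenberg_bundle_trivial_of_compact_or_discrete_general Λ hG π hπ
end

section
/- The set Λ = {(q,q) : q ∈ ℤ[1/p]} is a lattice in G = ℝ × ℚ_p (discrete and cocompact), and B = [0,1) × ℤ_p is a fundamental domain for Λ in G: every (s,x) ∈ ℝ × ℚ_p decomposes uniquely as (s,x) = (λ,λ) + (b₁,b₂) with λ ∈ ℤ[1/p] and (b₁,b₂) ∈ [0,1) × ℤ_p, where λ = {x}_p + ⌊s − {x}_p⌋. -/
/-- Membership in `ℤ[1/p] = {a/pᵏ : a, k ∈ ℤ}` as a set of rationals. -/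
def InZInvP (p : ℕ) (q : ℚ) : Prop := ∃ a k : ℤ, q = (a : ℚ) / (p : ℚ) ^ k

/-!
A rational lies in `ℤ[1/p]` iff its denominator divides a power of `p`. If it is moreover a
`p`-adic integer, its denominator is prime to `p`, so it is an integer; hence the only lattice
point `(q, q)` with `|q| < 1` and `‖q‖_p ≤ 1` is `0`, which gives both discreteness of `Λ` and
uniqueness of the decomposition. For existence, `pⁿ x ∈ ℤ_p` for large `n`, and approximating
`pⁿ x` by an integer `m` to within `p⁻ⁿ` puts `x` within `p`-adic distance `1` of `m / pⁿ`;
adding the integer `⌊s - m / pⁿ⌋` then fixes the real coordinate without spoiling the `p`-adic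
one. Cocompactness follows, `G ⧸ Λ` being the image of the compact set `[0,1] × ℤ_p`.
-/

variable {p : ℕ}

lemma inZInvP_iff_exists_den_dvd_pow (hp : p ≠ 0) {q : ℚ} :
    InZInvP p q ↔ ∃ n : ℕ, q.den ∣ p ^ n := by
  constructor
  · rintro ⟨a, k, rfl⟩
    obtain ⟨n, rfl | rfl⟩ := Int.eq_nat_or_neg k
    · refine ⟨n, Int.natCast_dvd_natCast.1 ?_⟩
      simpa [Rat.divInt_eq_div] using Rat.den_dvd a (p ^ n)
    · have : (a : ℚ) / (p : ℚ) ^ (-(n : ℤ)) = ((a * p ^ n : ℤ) : ℚ) := by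
        push_cast
        rw [zpow_neg, zpow_natCast, div_inv_eq_mul]
      exact ⟨0, by rw [this, Rat.den_intCast]; exact one_dvd _⟩
  · rintro ⟨n, c, hc⟩
    have hc0 : (c : ℚ) ≠ 0 := Nat.cast_ne_zero.2 (right_ne_zero_of_mul (hc ▸ pow_ne_zero n hp))
    refine ⟨q.num * c, n, ?_⟩
    rw [zpow_natCast, ← Nat.cast_pow, hc]
    push_cast
    rw [mul_div_mul_right _ _ hc0, Rat.num_div_den]

def zInvP (p : ℕ) [NeZero p] : AddSubgroup ℚ where
  carrier := {q | InZInvP p q}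
  add_mem' := by
    simp only [Set.mem_ofPred_eq, inZInvP_iff_exists_den_dvd_pow (NeZero.ne p)]
    rintro q r ⟨n, hn⟩ ⟨m, hm⟩
    exact ⟨n + m, (Rat.add_den_dvd q r).trans (pow_add p n m ▸ mul_dvd_mul hn hm)⟩
  zero_mem' := ⟨0, 0, by simp⟩
  neg_mem' := by
    simp only [Set.mem_ofPred_eq, inZInvP_iff_exists_den_dvd_pow (NeZero.ne p), Rat.neg_den,
      imp_self, implies_true]

lemma mem_zInvP [NeZero p] {q : ℚ} : q ∈ zInvP p ↔ InZInvP p q := Iff.rfl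

lemma intCast_mem_zInvP [NeZero p] (m : ℤ) : (m : ℚ) ∈ zInvP p := ⟨m, 0, by simp⟩

section Padic

variable [Fact p.Prime]

lemma InZInvP.den_eq_one_of_norm_le_one {q : ℚ} (hq : InZInvP p q) (h : ‖(q : ℚ_[p])‖ ≤ 1) :
    q.den = 1 := by
  obtain ⟨n, hn⟩ := (inZInvP_iff_exists_den_dvd_pow (NeZero.ne p)).1 hq
  rw [Padic.norm_rat_le_one_iff_padicValuation_le_one, Rat.padicValuation_le_one_iff,
    ← Nat.Prime.coprime_iff_not_dvd Fact.out] at h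
  exact (h.symm.pow_right n).eq_one_of_dvd hn

lemma InZInvP.eq_zero_of_abs_lt_one_of_norm_le_one {q : ℚ} (hq : InZInvP p q)
    (h_real : |(q : ℝ)| < 1) (h_padic : ‖(q : ℚ_[p])‖ ≤ 1) : q = 0 := by
  rw [← Rat.coe_int_num_of_den_eq_one (hq.den_eq_one_of_norm_le_one h_padic)] at h_real ⊢
  have : |q.num| < 1 := by exact_mod_cast h_real
  simp [Int.abs_lt_one_iff.1 this]

lemma exists_inZInvP_norm_sub_le_one (x : ℚ_[p]) : ∃ q : ℚ, InZInvP p q ∧ ‖x - q‖ ≤ 1 := by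
  have hp : (1 : ℝ) < p := by exact_mod_cast (Fact.out : p.Prime).one_lt
  obtain ⟨n, hn⟩ := pow_unbounded_of_one_lt ‖x‖ hp
  have hpn : ‖(p : ℚ_[p]) ^ n‖ = ((p : ℝ) ^ n)⁻¹ := by
    rw [Padic.norm_p_pow, zpow_neg, zpow_natCast]
  have hy : ‖(p : ℚ_[p]) ^ n * x‖ ≤ 1 := by
    rw [norm_mul, hpn]
    exact inv_mul_le_one_of_le₀ hn.le (by positivity)
  obtain ⟨m, hm⟩ := PadicInt.denseRange_intCast.exists_dist_lt (⟨_, hy⟩ : ℤ_[p])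
    (ε := ((p : ℝ) ^ n)⁻¹) (by positivity)
  refine ⟨m / p ^ n, ⟨m, n, by norm_cast⟩, ?_⟩
  have hx : x - ((m / p ^ n : ℚ) : ℚ_[p]) = ((p : ℚ_[p]) ^ n)⁻¹ * ((p : ℚ_[p]) ^ n * x - m) := by
    rw [mul_sub, inv_mul_cancel_left₀ (pow_ne_zero _ (by exact_mod_cast NeZero.ne p))]
    push_cast
    ring
  have hdist : ‖(p : ℚ_[p]) ^ n * x - m‖ < ((p : ℝ) ^ n)⁻¹ := hm
  rw [hx, norm_mul, norm_inv, hpn, inv_inv, ← mul_inv_cancel₀ (by positivity : (p : ℝ) ^ n ≠ 0)]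
  gcongr

/-- `v ∈ (q, q) + [0,1) × ℤ_p` with `q ∈ ℤ[1/p]`. -/
def IsLatticeCoord (v : ℝ × ℚ_[p]) (q : ℚ) : Prop :=
  InZInvP p q ∧ v.1 - (q : ℝ) ∈ Set.Ico (0 : ℝ) 1 ∧ ‖v.2 - (q : ℚ_[p])‖ ≤ 1

lemma isLatticeCoord_add_floor {v : ℝ × ℚ_[p]} {q : ℚ} (hq : InZInvP p q)
    (h : ‖v.2 - (q : ℚ_[p])‖ ≤ 1) : IsLatticeCoord v (q + ⌊v.1 - (q : ℝ)⌋) := by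
  refine ⟨(zInvP p).add_mem hq (intCast_mem_zInvP _), ?_, ?_⟩
  · rw [← Int.floor_eq_zero_iff]
    push_cast
    rw [sub_add_eq_sub_sub, Int.floor_sub_intCast, sub_self]
  · rw [← dist_eq_norm, Rat.cast_add, Rat.cast_intCast]
    refine (dist_triangle_max _ (q : ℚ_[p]) _).trans (max_le (by rwa [dist_eq_norm]) ?_)
    rw [dist_self_add_right]
    exact Padic.norm_int_le_one _

lemma IsLatticeCoord.unique {v : ℝ × ℚ_[p]} {q q' : ℚ} (h : IsLatticeCoord v q)
    (h' : IsLatticeCoord v q') : q = q' := by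
  obtain ⟨hq, hreal, hpadic⟩ := h
  obtain ⟨hq', hreal', hpadic'⟩ := h'
  refine sub_eq_zero.1 ((zInvP p).sub_mem hq hq' |>.eq_zero_of_abs_lt_one_of_norm_le_one ?_ ?_)
  · have := abs_sub_lt_of_nonneg_of_lt hreal'.1 hreal'.2 hreal.1 hreal.2
    push_cast
    rwa [sub_sub_sub_cancel_left] at this
  · rw [Rat.cast_sub, ← dist_eq_norm]
    refine (dist_triangle_max _ v.2 _).trans (max_le ?_ ?_)
    · rwa [dist_comm, dist_eq_norm]
    · rwa [dist_eq_norm]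

lemma existsUnique_isLatticeCoord (v : ℝ × ℚ_[p]) : ∃! q : ℚ, IsLatticeCoord v q := by
  obtain ⟨q, hq, h⟩ := exists_inZInvP_norm_sub_le_one v.2
  have hcoord := isLatticeCoord_add_floor hq h
  exact ⟨_, hcoord, fun _ h' => h'.unique hcoord⟩

variable (p) in
noncomputable def zInvPLattice : AddSubgroup (ℝ × ℚ_[p]) :=
  (zInvP p).map ((Rat.castHom ℝ).prod (Rat.castHom ℚ_[p])).toAddMonoidHom

lemma coe_zInvPLattice : (zInvPLattice p : Set (ℝ × ℚ_[p])) =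
    {v | ∃ q : ℚ, InZInvP p q ∧ v = ((q : ℝ), (q : ℚ_[p]))} := by
  ext v
  simp [zInvPLattice, mem_zInvP, eq_comm]

instance : DiscreteTopology (zInvPLattice p) := by
  rw [discreteTopology_iff_isOpen_singleton_zero]
  have hzero : ({0} : Set (zInvPLattice p)) = Subtype.val ⁻¹' Metric.ball 0 1 := by
    ext ⟨_, q, hq, rfl⟩
    simp only [Set.mem_singleton_iff, Set.mem_preimage, mem_ball_zero_iff, Prod.norm_def,
      max_lt_iff, Real.norm_eq_abs]
    refine ⟨fun h => ?_, fun ⟨h_real, h_padic⟩ => ?_⟩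
    · simp_all
    · simp [hq.eq_zero_of_abs_lt_one_of_norm_le_one h_real h_padic.le]
  rw [hzero]
  exact Metric.isOpen_ball.preimage continuous_subtype_val

instance : CompactSpace ((ℝ × ℚ_[p]) ⧸ zInvPLattice p) where
  isCompact_univ := by
    have hB : (QuotientAddGroup.mk '' (Set.Icc (0 : ℝ) 1 ×ˢ Metric.closedBall (0 : ℚ_[p]) 1) :
        Set ((ℝ × ℚ_[p]) ⧸ zInvPLattice p)) = Set.univ := by
      refine Set.eq_univ_of_forall fun w => ?_
      obtain ⟨v, rfl⟩ := QuotientAddGroup.mk_surjective w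
      obtain ⟨q, ⟨hq, hreal, hpadic⟩, -⟩ := existsUnique_isLatticeCoord v
      refine ⟨v - ((q : ℝ), (q : ℚ_[p])), ⟨Set.Ico_subset_Icc_self hreal, by simpa using hpadic⟩, ?_⟩
      rw [QuotientAddGroup.eq]
      exact ⟨q, hq, by simp⟩
    rw [← hB]
    exact (isCompact_Icc.prod (isCompact_closedBall 0 1)).image continuous_quotient_mk'

end Padic

/-- The diagonal copy `Λ = {(q,q) : q ∈ ℤ[1/p]}` is a lattice
(discrete and cocompact) in `G = ℝ × ℚ_p`, and `B = [0,1) × ℤ_p` is a fundamental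
domain: every `(s,x) ∈ ℝ × ℚ_p` decomposes uniquely as `(s,x) = (λ,λ) + (b₁,b₂)` with
`λ ∈ ℤ[1/p]` and `(b₁,b₂) ∈ [0,1) × ℤ_p`; moreover `λ = {x}_p + ⌊s − {x}_p⌋`, where
`{·}_p` is the p-adic fractional part. -/
theorem zInvP_diagonal_lattice_in_real_prod_padic (p : ℕ) [Fact p.Prime] :
    ∃ Λ : AddSubgroup (ℝ × ℚ_[p]),
      ((Λ : Set (ℝ × ℚ_[p])) =
        {v | ∃ q : ℚ, InZInvP p q ∧ v = ((q : ℝ), (q : ℚ_[p]))}) ∧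
      DiscreteTopology Λ ∧
      CompactSpace ((ℝ × ℚ_[p]) ⧸ Λ) ∧
      (∀ v : ℝ × ℚ_[p], ∃! q : ℚ, InZInvP p q ∧
        v.1 - (q : ℝ) ∈ Set.Ico (0 : ℝ) 1 ∧ ‖v.2 - (q : ℚ_[p])‖ ≤ 1) ∧
      -- the unique lattice coordinate is `{x}_p + ⌊s − {x}_p⌋`:
      (∀ fract : ℚ_[p] → ℚ,
        (∀ y : ℚ_[p], InZInvP p (fract y) ∧ ((fract y : ℝ)) ∈ Set.Ico (0 : ℝ) 1 ∧
          ‖y - ((fract y : ℚ) : ℚ_[p])‖ ≤ 1) →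
        ∀ (v : ℝ × ℚ_[p]) (q : ℚ),
          (InZInvP p q ∧ v.1 - (q : ℝ) ∈ Set.Ico (0 : ℝ) 1 ∧ ‖v.2 - (q : ℚ_[p])‖ ≤ 1) →
          q = fract v.2 + (⌊v.1 - ((fract v.2 : ℚ) : ℝ)⌋ : ℤ)) := by
  refine ⟨zInvPLattice p, coe_zInvPLattice, inferInstance, inferInstance,
    existsUnique_isLatticeCoord, fun fract hfract v q hq => ?_⟩
  obtain ⟨hfract_mem, -, hfract_norm⟩ := hfract v.2
  exact IsLatticeCoord.unique hq (isLatticeCoord_add_floor hfract_mem hfract_norm)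
end
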